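/- arXiv:2112.02620 — 2 statements merged into one kernel-verified Lean document; each statement's English description precedes it below -/
import Mathlib

section
/- For every nonempty bounded set F ⊆ ℝ^n, the limit of dim_{A,reg}^θ(F) as θ → 0⁺ exists and equals the upper box-counting dimension: lim_{θ→0⁺} dim_{A,reg}^θ(F) = \overline{dim}_B(F). -/
open Set Metric
open scoped ENNReal

noncomputable section

/-- Covering number: the smallest number of sets of diameter at most `r` needed to
cover `F` (`∞` if no finite such cover exists). -/
def coverN {X : Type*} [PseudoMetricSpace X] (F : Set X) (r : ℝ) : ℝ≥0∞ :=
  sInf {m : ℝ≥0∞ | ∃ 𝒰 : Finset (Set X), (𝒰.card : ℝ≥0∞) = m ∧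
    (∀ U ∈ 𝒰, EMetric.diam U ≤ ENNReal.ofReal r) ∧ F ⊆ ⋃ U ∈ 𝒰, U}

/-- Regularized Assouad spectrum `dim_{A,reg}^θ(F)`. -/
def dimAreg {X : Type*} [PseudoMetricSpace X] (θ : ℝ) (F : Set X) : ℝ :=
  sInf {α : ℝ | 0 < α ∧ ∃ C : ℝ, 0 < C ∧ ∀ x ∈ F, ∀ r R : ℝ,
    0 < r → r ≤ R ^ (1/θ) → R ^ (1/θ) < R → R < 1 →
    coverN (closedBall x R ∩ F) r ≤ ENNReal.ofReal (C * (R/r) ^ α)}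

/-- (Unregularized) Assouad spectrum `dim_A^θ(F)`. -/
def dimAspec {X : Type*} [PseudoMetricSpace X] (θ : ℝ) (F : Set X) : ℝ :=
  sInf {α : ℝ | 0 < α ∧ ∃ C : ℝ, 0 < C ∧ ∀ x ∈ F, ∀ R : ℝ, 0 < R → R < 1 →
    coverN (closedBall x R ∩ F) (R ^ (1/θ)) ≤ ENNReal.ofReal (C * (R / R ^ (1/θ)) ^ α)}

/-- Upper box-counting dimension of a (bounded) set. -/
def dimBupper {X : Type*} [PseudoMetricSpace X] (F : Set X) : ℝ :=
  sInf {α : ℝ | 0 < α ∧ ∃ C : ℝ, 0 < C ∧ ∀ r : ℝ, 0 < r → r ≤ diam F →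
    coverN F r ≤ ENNReal.ofReal (C * r ^ (-α))}

/-- Assouad dimension. -/
def dimA {X : Type*} [PseudoMetricSpace X] (F : Set X) : ℝ :=
  sInf {α : ℝ | 0 < α ∧ ∃ C : ℝ, 0 < C ∧ ∀ x ∈ F, ∀ r R : ℝ, 0 < r → r ≤ R →
    coverN (closedBall x R ∩ F) r ≤ ENNReal.ofReal (C * (R/r) ^ α)}

/-- Quasi-Assouad dimension: `sup_{0<θ<1} dim_{A,reg}^θ(F)`. -/
def dimqA {X : Type*} [PseudoMetricSpace X] (F : Set X) : ℝ :=
  sSup ((fun θ => dimAreg θ F) '' Ioo (0:ℝ) 1)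

open Classical in
/-- Phase-transition parameter `ρ(F)`. -/
def rhoPT {X : Type*} [PseudoMetricSpace X] (F : Set X) : ℝ :=
  if ∃ θ ∈ Ioo (0:ℝ) 1, dimAreg θ F = dimqA F
  then sInf {θ | θ ∈ Ioo (0:ℝ) 1 ∧ dimAreg θ F = dimqA F}
  else 1

/-- The axes-parallel cube `Q(x,R) = ∏ [xᵢ - R, xᵢ + R]`. -/
def cubeQ {n : ℕ} (x : EuclideanSpace ℝ (Fin n)) (R : ℝ) : Set (EuclideanSpace ℝ (Fin n)) :=
  {y | ∀ i, x i - R ≤ y i ∧ y i ≤ x i + R}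

/-- The generation-`m` dyadic subcube of `Q(x,R)` with index `k`. -/
def dyadicCube {n : ℕ} (x : EuclideanSpace ℝ (Fin n)) (R : ℝ) (m : ℕ)
    (k : Fin n → Fin (2 ^ m)) : Set (EuclideanSpace ℝ (Fin n)) :=
  {y | ∀ i, x i - R + (k i : ℝ) * (2 * R / 2 ^ m) ≤ y i ∧
        y i ≤ x i - R + ((k i : ℝ) + 1) * (2 * R / 2 ^ m)}

/-- `N_d(B(x,R) ∩ F, m)`: the number of generation-`m` dyadic subcubes of `Q(x,R)`
that intersect `B(x,R) ∩ F`. -/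
def Nd {n : ℕ} (x : EuclideanSpace ℝ (Fin n)) (R : ℝ)
    (F : Set (EuclideanSpace ℝ (Fin n))) (m : ℕ) : ℕ :=
  Nat.card {k : Fin n → Fin (2 ^ m) // (dyadicCube x R m k ∩ (closedBall x R ∩ F)).Nonempty}

/-- `f` is `η`-quasisymmetric on the set `S`. -/
def QSOn {X Y : Type*} [PseudoMetricSpace X] [PseudoMetricSpace Y]
    (η : ℝ → ℝ) (f : X → Y) (S : Set X) : Prop :=
  ∀ x ∈ S, ∀ y ∈ S, ∀ z ∈ S, x ≠ z →
    dist (f x) (f y) ≤ η (dist x y / dist x z) * dist (f x) (f z)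

/-- Distance between two sets. -/
def setDist {X : Type*} [PseudoMetricSpace X] (A B : Set X) : ℝ :=
  sInf {d : ℝ | ∃ a ∈ A, ∃ b ∈ B, d = dist a b}

end

/-!
Write `N(r)` for the covering number of `F` at scale `r`. If `N(r) ≲ r^(-α)`, then for
`r ≤ R^(1/θ)` we have `r^(-α) ≤ (R/r)^(α/(1-θ))`, so `dim_{A,reg}^θ F ≤ dim_B F / (1 - θ)`.
Conversely, if `β` is admissible for the spectrum, covering `F` at scale `r^θ` and each piece
at scale `r` gives `N(r) ≤ C r^(-(1-θ)β) N(r^θ)`. Iterating along `r, r^θ, r^θ², …` until a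
fixed scale `ρ` is reached, where total boundedness bounds `N`, the factor `C` is absorbed by
`r^((1-θ)ε)` for small `ρ`, so `β + ε` is an admissible box exponent. Hence
`dim_B F ≤ dim_{A,reg}^θ F ≤ dim_B F / (1 - θ)`, and `θ → 0⁺` squeezes.
-/

lemma Real.rpow_neg_le_div_rpow_div_one_sub {r R θ α : ℝ} (hr : 0 < r) (hθ : θ < 1)
    (hrR : r ^ θ ≤ R) (hα : 0 ≤ α) : r ^ (-α) ≤ (R / r) ^ (α / (1 - θ)) := by
  have hθ1 : 1 - θ ≠ 0 := by linarith
  calc r ^ (-α) = (r ^ θ / r) ^ (α / (1 - θ)) := by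
        rw [← Real.rpow_sub_one hr.ne', ← Real.rpow_mul hr.le]
        congr 1
        field_simp
        ring
    _ ≤ (R / r) ^ (α / (1 - θ)) := by
        gcongr

lemma Real.rpow_rpow_neg_mul_div_rpow {r : ℝ} (hr : 0 < r) (θ β ε : ℝ) :
    (r ^ θ) ^ (-(β + ε)) * (r ^ θ / r) ^ β = r ^ (-(β + ε)) * r ^ ((1 - θ) * ε) := by
  rw [← Real.rpow_sub_one hr.ne', ← Real.rpow_mul hr.le, ← Real.rpow_mul hr.le,
    ← Real.rpow_add hr, ← Real.rpow_add hr]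
  ring_nf

/-- The scales `r, r ^ θ, r ^ θ², …` increase to `1`, so they reach `[ρ, 1)` after finitely many
steps. -/
lemma Real.rpow_induction {P : ℝ → Prop} {θ ρ : ℝ} (hθ : θ ∈ Ioo (0 : ℝ) 1) (hρ : ρ < 1)
    (base : ∀ r, ρ ≤ r → r < 1 → P r) (step : ∀ r, 0 < r → r < ρ → P (r ^ θ) → P r) :
    ∀ r, 0 < r → r < 1 → P r := by
  have key : ∀ m : ℕ, ∀ r : ℝ, 0 < r → r < 1 → ρ ≤ r ^ (θ ^ m) → P r := by
    intro m
    induction m with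
    | zero => exact fun r _ hr1 h => base r (by simpa using h) hr1
    | succ m ih =>
      intro r hr hr1 h
      rcases le_or_gt ρ r with hρr | hrρ
      · exact base r hρr hr1
      refine step r hr hrρ (ih _ (Real.rpow_pos_of_pos hr θ) (Real.rpow_lt_one hr.le hr1 hθ.1) ?_)
      rwa [← Real.rpow_mul hr.le, ← pow_succ']
  intro r hr hr1
  have hlim : Filter.Tendsto (fun m : ℕ => r ^ (θ ^ m)) Filter.atTop (nhds 1) := by
    have := (Real.continuousAt_const_rpow hr.ne').tendsto.comp
      (tendsto_pow_atTop_nhds_zero_of_lt_one hθ.1.le hθ.2)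
    rwa [Real.rpow_zero] at this
  obtain ⟨m, hm⟩ := (hlim.eventually (eventually_ge_nhds hρ)).exists
  exact key m r hr hr1 hm

lemma Real.exists_mul_rpow_le_one (C : ℝ) {e : ℝ} (he : 0 < e) :
    ∃ ρ : ℝ, 0 < ρ ∧ ρ < 1 ∧ C * ρ ^ e ≤ 1 := by
  have hlim : Filter.Tendsto (fun r : ℝ => C * r ^ e) (nhdsWithin 0 (Ioi 0)) (nhds 0) := by
    have := (((Real.continuousAt_rpow_const 0 e (Or.inr he.le)).tendsto).const_mul C).mono_left
      (nhdsWithin_le_nhds (s := Ioi 0))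
    simpa [Real.zero_rpow he.ne'] using this
  have hev : ∀ᶠ r in nhdsWithin 0 (Ioi 0), 0 < r ∧ r < 1 ∧ C * r ^ e ≤ 1 := by
    filter_upwards [self_mem_nhdsWithin, Ioo_mem_nhdsGT one_pos,
      hlim.eventually (ge_mem_nhds one_pos)] with r h0 h1 h2
    exact ⟨h0, h1.2, h2⟩
  exact hev.exists

section CoveringNumber

variable {X : Type*} [PseudoMetricSpace X] {F G : Set X} {r R : ℝ}

lemma coverN_le_card (𝒰 : Finset (Set X)) (hd : ∀ U ∈ 𝒰, ediam U ≤ ENNReal.ofReal r)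
    (hc : F ⊆ ⋃ U ∈ 𝒰, U) : coverN F r ≤ 𝒰.card :=
  sInf_le ⟨𝒰, rfl, hd, hc⟩

lemma exists_finset_card_eq_coverN (h : coverN F r ≠ ⊤) :
    ∃ 𝒰 : Finset (Set X), (𝒰.card : ℝ≥0∞) = coverN F r ∧
      (∀ U ∈ 𝒰, ediam U ≤ ENNReal.ofReal r) ∧ F ⊆ ⋃ U ∈ 𝒰, U := by
  set covers := {𝒰 : Finset (Set X) | (∀ U ∈ 𝒰, ediam U ≤ ENNReal.ofReal r) ∧ F ⊆ ⋃ U ∈ 𝒰, U}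
  have hne : covers.Nonempty := by
    by_contra hempty
    refine h (sInf_eq_top.mpr ?_)
    rintro _ ⟨𝒰, -, h𝒰⟩
    exact absurd ⟨𝒰, h𝒰⟩ hempty
  obtain ⟨𝒰, h𝒰, hmin⟩ := (measure Finset.card).wf.has_min covers hne
  refine ⟨𝒰, le_antisymm ?_ (coverN_le_card 𝒰 h𝒰.1 h𝒰.2), h𝒰⟩
  refine le_sInf ?_
  rintro _ ⟨𝒱, rfl, h𝒱⟩
  exact_mod_cast not_lt.mp (hmin 𝒱 h𝒱)

lemma coverN_mono (h : G ⊆ F) : coverN G r ≤ coverN F r :=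
  le_sInf fun _ ⟨𝒰, h𝒰, hd, hc⟩ => h𝒰 ▸ coverN_le_card 𝒰 hd (h.trans hc)

lemma coverN_anti {r' : ℝ} (h : r ≤ r') : coverN F r' ≤ coverN F r :=
  le_sInf fun _ ⟨𝒰, h𝒰, hd, hc⟩ =>
    h𝒰 ▸ coverN_le_card 𝒰 (fun U hU => (hd U hU).trans (ENNReal.ofReal_le_ofReal h)) hc

@[simp] lemma coverN_empty : coverN (∅ : Set X) r = 0 :=
  nonpos_iff_eq_zero.mp <| by
    simpa using coverN_le_card (F := (∅ : Set X)) (r := r) ∅ (by simp) (by simp)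

lemma coverN_le_one_of_ediam_le (h : ediam F ≤ ENNReal.ofReal r) : coverN F r ≤ 1 := by
  simpa using coverN_le_card {F} (by simpa using h) (by simp)

lemma coverN_union_le : coverN (F ∪ G) r ≤ coverN F r + coverN G r := by
  classical
  rcases eq_or_ne (coverN F r) ⊤ with hF | hF
  · simp [hF]
  rcases eq_or_ne (coverN G r) ⊤ with hG | hG
  · simp [hG]
  obtain ⟨𝒰, h𝒰, hd𝒰, hc𝒰⟩ := exists_finset_card_eq_coverN hF
  obtain ⟨𝒱, h𝒱, hd𝒱, hc𝒱⟩ := exists_finset_card_eq_coverN hG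
  calc coverN (F ∪ G) r ≤ (𝒰 ∪ 𝒱).card := by
        refine coverN_le_card _ (fun U hU => ?_) ?_
        · rcases Finset.mem_union.mp hU with hU | hU
          exacts [hd𝒰 U hU, hd𝒱 U hU]
        · rw [Finset.set_biUnion_union]
          exact union_subset_union hc𝒰 hc𝒱
    _ ≤ 𝒰.card + 𝒱.card := by exact_mod_cast Finset.card_union_le 𝒰 𝒱
    _ = coverN F r + coverN G r := by rw [h𝒰, h𝒱]

lemma coverN_biUnion_le {ι : Type*} (s : Finset ι) (A : ι → Set X) :
    coverN (⋃ i ∈ s, A i) r ≤ ∑ i ∈ s, coverN (A i) r := by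
  classical
  induction s using Finset.induction_on with
  | empty => simp
  | insert i s hi ih =>
    rw [Finset.set_biUnion_insert, Finset.sum_insert hi]
    exact coverN_union_le.trans (by gcongr)

lemma coverN_le_mul_of_forall_closedBall (hR : 0 ≤ R) (hFR : coverN F R ≠ ⊤) {M : ℝ≥0∞}
    (hloc : ∀ x ∈ F, coverN (closedBall x R ∩ F) r ≤ M) :
    coverN F r ≤ coverN F R * M := by
  obtain ⟨𝒰, h𝒰, hd, hc⟩ := exists_finset_card_eq_coverN hFR
  have hpiece : ∀ U ∈ 𝒰, coverN (U ∩ F) r ≤ M := by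
    intro U hU
    rcases (U ∩ F).eq_empty_or_nonempty with hUF | ⟨x, hxU, hxF⟩
    · simp [hUF]
    have hsub : U ∩ F ⊆ closedBall x R ∩ F := fun y hy =>
      ⟨(edist_le_ofReal hR).mp ((edist_le_ediam_of_mem hy.1 hxU).trans (hd U hU)), hy.2⟩
    exact (coverN_mono hsub).trans (hloc x hxF)
  calc coverN F r ≤ coverN (⋃ U ∈ 𝒰, U ∩ F) r :=
        coverN_mono fun y hy => by
          obtain ⟨U, hU, hyU⟩ := mem_iUnion₂.mp (hc hy)
          exact mem_iUnion₂.mpr ⟨U, hU, hyU, hy⟩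
    _ ≤ ∑ U ∈ 𝒰, coverN (U ∩ F) r := coverN_biUnion_le 𝒰 _
    _ ≤ ∑ _U ∈ 𝒰, M := Finset.sum_le_sum hpiece
    _ = coverN F R * M := by rw [Finset.sum_const, nsmul_eq_mul, h𝒰]

lemma coverN_lt_top_of_totallyBounded (hF : TotallyBounded F) (hr : 0 < r) : coverN F r < ⊤ := by
  classical
  obtain ⟨t, ht, hFt⟩ := totallyBounded_iff.mp hF (r / 2) (half_pos hr)
  refine (coverN_le_card (ht.toFinset.image fun y => ball y (r / 2)) ?_ ?_).trans_lt
    (ENNReal.natCast_lt_top _)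
  · simp only [Finset.mem_image, Finite.mem_toFinset, forall_exists_index, and_imp]
    rintro _ y - rfl
    refine ediam_le_of_forall_dist_le fun a ha b hb => ?_
    linarith [dist_triangle_right a b y, mem_ball.mp ha, mem_ball.mp hb]
  · simpa using hFt

end CoveringNumber

section Exponents

variable {X : Type*} [PseudoMetricSpace X] {F : Set X} {θ : ℝ}

def boxExponents (F : Set X) : Set ℝ :=
  {α : ℝ | 0 < α ∧ ∃ C : ℝ, 0 < C ∧ ∀ r : ℝ, 0 < r → r ≤ diam F →
    coverN F r ≤ ENNReal.ofReal (C * r ^ (-α))}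

def IsRegAssouadBound (θ : ℝ) (F : Set X) (α C : ℝ) : Prop :=
  ∀ x ∈ F, ∀ r R : ℝ, 0 < r → r ≤ R ^ (1/θ) → R ^ (1/θ) < R → R < 1 →
    coverN (closedBall x R ∩ F) r ≤ ENNReal.ofReal (C * (R/r) ^ α)

def regAssouadExponents (θ : ℝ) (F : Set X) : Set ℝ :=
  {α : ℝ | 0 < α ∧ ∃ C : ℝ, 0 < C ∧ IsRegAssouadBound θ F α C}

lemma dimBupper_eq_sInf : dimBupper F = sInf (boxExponents F) := rfl

lemma dimAreg_eq_sInf : dimAreg θ F = sInf (regAssouadExponents θ F) := rfl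

lemma boxExponents_bddBelow : BddBelow (boxExponents F) := ⟨0, fun _ hα => hα.1.le⟩

lemma regAssouadExponents_bddBelow : BddBelow (regAssouadExponents θ F) :=
  ⟨0, fun _ hα => hα.1.le⟩

lemma div_one_sub_mem_regAssouadExponents (hF : Bornology.IsBounded F) (hθ : θ ∈ Ioo (0 : ℝ) 1)
    {α : ℝ} (hα : α ∈ boxExponents F) : α / (1 - θ) ∈ regAssouadExponents θ F := by
  obtain ⟨hα0, C, hC, hbox⟩ := hα
  have hθ1 : 0 < 1 - θ := sub_pos.mpr hθ.2
  refine ⟨div_pos hα0 hθ1, max C 1, by positivity, fun x _ r R hr hrR hRR _ => ?_⟩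
  have hR : 0 < R := (hr.trans_le hrR).trans hRR
  have hrθ : r ^ θ ≤ R := by
    calc r ^ θ ≤ (R ^ (1 / θ)) ^ θ := Real.rpow_le_rpow hr.le hrR hθ.1.le
      _ = R := by rw [one_div, Real.rpow_inv_rpow hR.le hθ.1.ne']
  have hratio : 1 ≤ (R / r) ^ (α / (1 - θ)) :=
    Real.one_le_rpow ((one_le_div hr).mpr (hrR.trans hRR.le)) (by positivity)
  rcases le_or_gt r (diam F) with hr_diam | hr_diam
  · calc coverN (closedBall x R ∩ F) r ≤ coverN F r := coverN_mono inter_subset_right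
      _ ≤ ENNReal.ofReal (C * r ^ (-α)) := hbox r hr hr_diam
      _ ≤ ENNReal.ofReal (max C 1 * (R / r) ^ (α / (1 - θ))) := by
          gcongr
          · exact le_max_left C 1
          · exact Real.rpow_neg_le_div_rpow_div_one_sub hr hθ.2 hrθ hα0.le
  · calc coverN (closedBall x R ∩ F) r ≤ 1 := by
          refine coverN_le_one_of_ediam_le ((ediam_mono inter_subset_right).trans ?_)
          exact ediam_le_of_forall_dist_le fun a ha b hb =>
            (dist_le_diam_of_mem hF ha hb).trans hr_diam.le
      _ ≤ ENNReal.ofReal (max C 1 * (R / r) ^ (α / (1 - θ))) :=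
          ENNReal.one_le_ofReal.mpr (one_le_mul_of_one_le_of_one_le (le_max_right C 1) hratio)

lemma IsRegAssouadBound.coverN_le_mul {β C r : ℝ} (h : IsRegAssouadBound θ F β C)
    (hθ : θ ∈ Ioo (0 : ℝ) 1) (hr : 0 < r) (hr1 : r < 1) (hfin : coverN F (r ^ θ) ≠ ⊤) :
    coverN F r ≤ coverN F (r ^ θ) * ENNReal.ofReal (C * (r ^ θ / r) ^ β) := by
  have hRr : (r ^ θ) ^ (1 / θ) = r := by rw [one_div, Real.rpow_rpow_inv hr.le hθ.1.ne']
  have hrR : r < r ^ θ := by simpa using Real.rpow_lt_rpow_of_exponent_gt hr hr1 hθ.2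
  refine coverN_le_mul_of_forall_closedBall (Real.rpow_nonneg hr.le θ) hfin fun x hx => ?_
  exact h x hx r (r ^ θ) hr hRr.ge (hRr.trans_lt hrR) (Real.rpow_lt_one hr.le hr1 hθ.1)

lemma add_mem_boxExponents (hF : TotallyBounded F) (hθ : θ ∈ Ioo (0 : ℝ) 1) {β ε : ℝ}
    (hβ : β ∈ regAssouadExponents θ F) (hε : 0 < ε) : β + ε ∈ boxExponents F := by
  obtain ⟨hβ0, C, hC, hspec⟩ := hβ
  set γ := β + ε
  set e := (1 - θ) * ε
  have he : 0 < e := mul_pos (sub_pos.mpr hθ.2) hε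
  obtain ⟨ρ, hρ0, hρ1, hCρ⟩ := Real.exists_mul_rpow_le_one C he
  set M := (coverN F ρ).toReal
  have hM : coverN F ρ = ENNReal.ofReal M :=
    (ENNReal.ofReal_toReal (coverN_lt_top_of_totallyBounded hF hρ0).ne).symm
  set A := max 1 (diam F)
  have hA : 0 < A := lt_max_of_lt_left one_pos
  set K := (M + 1) * A ^ γ
  have hK : 0 < K := by positivity
  have base : ∀ r, ρ ≤ r → r ≤ A → coverN F r ≤ ENNReal.ofReal (K * r ^ (-γ)) := by
    intro r hρr hrA
    have hr : 0 < r := hρ0.trans_le hρr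
    have hAr : 1 ≤ A ^ γ * r ^ (-γ) := by
      rw [Real.rpow_neg hr.le, ← div_eq_mul_inv, ← Real.div_rpow hA.le hr.le]
      exact Real.one_le_rpow ((one_le_div hr).mpr hrA) (by positivity)
    calc coverN F r ≤ coverN F ρ := coverN_anti hρr
      _ = ENNReal.ofReal M := hM
      _ ≤ ENNReal.ofReal (K * r ^ (-γ)) := by
          apply ENNReal.ofReal_le_ofReal
          nlinarith [ENNReal.toReal_nonneg (a := coverN F ρ)]
  have small : ∀ r, 0 < r → r < 1 → coverN F r ≤ ENNReal.ofReal (K * r ^ (-γ)) := by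
    refine Real.rpow_induction hθ hρ1
      (fun r hρr hr1 => base r hρr (hr1.le.trans (le_max_left _ _))) ?_
    intro r hr hrρ ih
    have hgain : C * r ^ e ≤ 1 := (by gcongr : C * r ^ e ≤ C * ρ ^ e).trans hCρ
    calc coverN F r ≤ coverN F (r ^ θ) * ENNReal.ofReal (C * (r ^ θ / r) ^ β) :=
          hspec.coverN_le_mul hθ hr (hrρ.trans hρ1) (ne_top_of_le_ne_top ENNReal.ofReal_ne_top ih)
      _ ≤ ENNReal.ofReal (K * (r ^ θ) ^ (-γ)) * ENNReal.ofReal (C * (r ^ θ / r) ^ β) := by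
          gcongr
      _ = ENNReal.ofReal (K * r ^ (-γ) * (C * r ^ e)) := by
          rw [← ENNReal.ofReal_mul (by positivity)]
          congr 1
          linear_combination (K * C) * Real.rpow_rpow_neg_mul_div_rpow hr θ β ε
      _ ≤ ENNReal.ofReal (K * r ^ (-γ)) :=
          ENNReal.ofReal_le_ofReal (mul_le_of_le_one_right (by positivity) hgain)
  refine ⟨by positivity, K, hK, fun r hr hr_diam => ?_⟩
  rcases lt_or_ge r 1 with hr1 | hr1
  · exact small r hr hr1
  · exact base r (hρ1.le.trans hr1) (hr_diam.trans (le_max_right _ _))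

lemma dimBupper_le_dimAreg (hF : TotallyBounded F) (hθ : θ ∈ Ioo (0 : ℝ) 1) :
    dimBupper F ≤ dimAreg θ F := by
  rw [dimBupper_eq_sInf, dimAreg_eq_sInf]
  -- `sInf ∅ = 0`, so the case of no admissible exponent needs both sets to be empty together.
  rcases (regAssouadExponents θ F).eq_empty_or_nonempty with hA | hA
  · have hB : boxExponents F = ∅ := eq_empty_of_forall_notMem fun α hα => by
      simpa [hA] using div_one_sub_mem_regAssouadExponents hF.isBounded hθ hα
    rw [hA, hB]
  · exact le_csInf hA fun β hβ => le_of_forall_pos_le_add fun ε hε =>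
      csInf_le boxExponents_bddBelow (add_mem_boxExponents hF hθ hβ hε)

lemma dimAreg_le_dimBupper_div (hF : TotallyBounded F) (hθ : θ ∈ Ioo (0 : ℝ) 1) :
    dimAreg θ F ≤ dimBupper F / (1 - θ) := by
  have hθ1 : 0 < 1 - θ := sub_pos.mpr hθ.2
  rw [dimBupper_eq_sInf, dimAreg_eq_sInf, le_div_iff₀ hθ1]
  rcases (boxExponents F).eq_empty_or_nonempty with hB | hB
  · have hA : regAssouadExponents θ F = ∅ := eq_empty_of_forall_notMem fun β hβ => by
      simpa [hB] using add_mem_boxExponents hF hθ hβ one_pos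
    simp [hA, hB]
  · refine le_csInf hB fun α hα => ?_
    rw [← le_div_iff₀ hθ1]
    exact csInf_le regAssouadExponents_bddBelow
      (div_one_sub_mem_regAssouadExponents hF.isBounded hθ hα)

theorem tendsto_dimAreg_nhdsGT_zero (hF : TotallyBounded F) :
    Filter.Tendsto (fun θ => dimAreg θ F) (nhdsWithin 0 (Ioi 0)) (nhds (dimBupper F)) := by
  have hIoo : Ioo (0 : ℝ) 1 ∈ nhdsWithin 0 (Ioi 0) := Ioo_mem_nhdsGT one_pos
  have hupper : Filter.Tendsto (fun θ : ℝ => dimBupper F / (1 - θ)) (nhdsWithin 0 (Ioi 0))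
      (nhds (dimBupper F)) := by
    have h : Filter.Tendsto (fun θ : ℝ => dimBupper F / (1 - θ)) (nhds 0)
        (nhds (dimBupper F / (1 - 0))) :=
      tendsto_const_nhds.div (tendsto_const_nhds.sub Filter.tendsto_id) (by norm_num)
    simpa using h.mono_left nhdsWithin_le_nhds
  exact tendsto_of_tendsto_of_tendsto_of_le_of_le' tendsto_const_nhds hupper
    (Filter.mem_of_superset hIoo fun θ hθ => dimBupper_le_dimAreg hF hθ)
    (Filter.mem_of_superset hIoo fun θ hθ => dimAreg_le_dimBupper_div hF hθ)

end Exponents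

theorem stmt9_general {n : ℕ} (F : Set (EuclideanSpace ℝ (Fin n)))
    (hF : Bornology.IsBounded F) :
    Filter.Tendsto (fun θ => dimAreg θ F) (nhdsWithin 0 (Ioi (0:ℝ)))
      (nhds (dimBupper F)) :=
  tendsto_dimAreg_nhdsGT_zero (totallyBounded_closure.mp hF.isCompact_closure.totallyBounded)

/-- `dim_{A,reg}^θ(F) → \overline{dim}_B(F)` as `θ → 0⁺`. -/
theorem stmt9 {n : ℕ} (F : Set (EuclideanSpace ℝ (Fin n)))
    (hne : F.Nonempty) (hF : Bornology.IsBounded F) :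
    Filter.Tendsto (fun θ => dimAreg θ F) (nhdsWithin 0 (Ioi (0:ℝ)))
      (nhds (dimBupper F)) :=
  stmt9_general F hF
end

section
/- For every set F ⊆ ℝ^n and all 0 < θ₁ ≤ θ₂ < 1: dim_{A,reg}^{θ₁}(F) ≥ ((1 − θ₂)/(1 − θ₁))·dim_{A,reg}^{θ₂}(F). -/
open Set Metric
open scoped ENNReal

lemma coverN_mono_s15 {X : Type*} [PseudoMetricSpace X] {A B : Set X} (h : A ⊆ B) (r : ℝ) :
    coverN A r ≤ coverN B r := by
  apply sInf_le_sInf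
  rintro m ⟨𝒰, hcard, hdiam, hcov⟩
  exact ⟨𝒰, hcard, hdiam, h.trans hcov⟩

/-- monotonicity-type lower bound for the regularized Assouad spectrum. -/
theorem stmt15 {n : ℕ} (F : Set (EuclideanSpace ℝ (Fin n))) (θ₁ θ₂ : ℝ)
    (hθ₁ : 0 < θ₁) (h12 : θ₁ ≤ θ₂) (hθ₂ : θ₂ < 1) :
    ((1 - θ₂) / (1 - θ₁)) * dimAreg θ₂ F ≤ dimAreg θ₁ F := by
  have hθ₂0 : 0 < θ₂ := lt_of_lt_of_le hθ₁ h12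
  have hθ₁1 : θ₁ < 1 := lt_of_le_of_lt h12 hθ₂
  have h1θ₁ : (0:ℝ) < 1 - θ₁ := by linarith
  have h1θ₂ : (0:ℝ) < 1 - θ₂ := by linarith
  have hinv₁ : 1 < 1/θ₁ := by rw [lt_div_iff₀ hθ₁]; linarith
  have hinv₂ : 1 < 1/θ₂ := by rw [lt_div_iff₀ hθ₂0]; linarith
  set S : ℝ → Set ℝ := fun θ => {α : ℝ | 0 < α ∧ ∃ C : ℝ, 0 < C ∧ ∀ x ∈ F, ∀ r R : ℝ,
    0 < r → r ≤ R ^ (1/θ) → R ^ (1/θ) < R → R < 1 →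
    coverN (closedBall x R ∩ F) r ≤ ENNReal.ofReal (C * (R/r) ^ α)} with hSdef
  have hdim : ∀ θ, dimAreg θ F = sInf (S θ) := fun θ => rfl
  have hsub : S θ₂ ⊆ S θ₁ := by
    rintro α ⟨hα, C, hC, h⟩
    refine ⟨hα, C, hC, fun x hx r R hr hrR hRR hR1 => ?_⟩
    have hR0 : 0 < R := lt_trans (lt_of_lt_of_le hr hrR) hRR
    have hpow : R ^ (1/θ₁) ≤ R ^ (1/θ₂) :=
      Real.rpow_le_rpow_of_exponent_ge hR0 hR1.le
        (one_div_le_one_div_of_le hθ₁ h12)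
    have h2 : R ^ (1/θ₂) < R := by
      have := Real.rpow_lt_rpow_of_exponent_gt hR0 hR1 hinv₂
      rwa [Real.rpow_one] at this
    exact h x hx r R hr (hrR.trans hpow) h2 hR1
  rcases eq_empty_or_nonempty (S θ₁) with he | hne
  · have he2 : S θ₂ = ∅ := eq_empty_of_subset_empty (he ▸ hsub)
    rw [hdim, hdim, he, he2, Real.sInf_empty, mul_zero]
  · rw [hdim, hdim]
    apply le_csInf hne
    rintro α ⟨hα, C, hC, h⟩
    set α' : ℝ := α * (1 - θ₁) / (1 - θ₂) with hα'def
    have hα' : 0 < α' := by positivity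
    have hαα' : α ≤ α' := by
      rw [hα'def, mul_div_assoc]
      exact le_mul_of_one_le_right hα.le ((one_le_div h1θ₂).2 (by linarith))
    have hmem : α' ∈ S θ₂ := by
      refine ⟨hα', C, hC, fun x hx r R hr hrR2 hRR2 hR1 => ?_⟩
      have hR0 : 0 < R := lt_trans (lt_of_lt_of_le hr hrR2) hRR2
      have hrltR : r < R := lt_of_le_of_lt hrR2 hRR2
      have hr1 : r < 1 := hrltR.trans hR1
      have hRr1 : 1 ≤ R / r := (one_le_div hr).2 hrltR.le
      by_cases hcase : r ≤ R ^ (1/θ₁)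
      · have h1' : R ^ (1/θ₁) < R := by
          have := Real.rpow_lt_rpow_of_exponent_gt hR0 hR1 hinv₁
          rwa [Real.rpow_one] at this
        have key := h x hx r R hr hcase h1' hR1
        refine key.trans (ENNReal.ofReal_le_ofReal ?_)
        exact mul_le_mul_of_nonneg_left
          (Real.rpow_le_rpow_of_exponent_le hRr1 hαα') hC.le
      · push_neg at hcase
        set R' : ℝ := r ^ θ₁ with hR'def
        have hR'eq : R' ^ (1/θ₁) = r := by
          rw [hR'def, ← Real.rpow_mul hr.le, mul_one_div, div_self hθ₁.ne', Real.rpow_one]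
        have hR'lt : R' ^ (1/θ₁) < R' := by
          rw [hR'eq, hR'def]
          have := Real.rpow_lt_rpow_of_exponent_gt hr hr1 hθ₁1
          rwa [Real.rpow_one] at this
        have hR'1 : R' < 1 := Real.rpow_lt_one hr.le hr1 hθ₁
        have hRR' : R ≤ R' := by
          have h1 : (R ^ (1/θ₁)) ^ θ₁ ≤ r ^ θ₁ :=
            Real.rpow_le_rpow (Real.rpow_nonneg hR0.le _) hcase.le hθ₁.le
          rwa [← Real.rpow_mul hR0.le, one_div_mul_cancel hθ₁.ne', Real.rpow_one] at h1
        have key := h x hx r R' hr hR'eq.ge hR'lt hR'1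
        have mono : coverN (closedBall x R ∩ F) r ≤ coverN (closedBall x R' ∩ F) r :=
          coverN_mono_s15 (inter_subset_inter_left F (closedBall_subset_closedBall hRR')) r
        refine (mono.trans key).trans (ENNReal.ofReal_le_ofReal ?_)
        refine mul_le_mul_of_nonneg_left ?_ hC.le
        have hdivR' : R' / r = r ^ (θ₁ - 1) := by
          rw [Real.rpow_sub hr, Real.rpow_one]
        have hbase : r ^ (θ₂ - 1) ≤ R / r := by
          have h2 : r ^ θ₂ ≤ R := by
            have := Real.rpow_le_rpow hr.le hrR2 hθ₂0.le
            rwa [← Real.rpow_mul hR0.le, one_div_mul_cancel hθ₂0.ne', Real.rpow_one] at this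
          rw [Real.rpow_sub hr, Real.rpow_one]
          gcongr
        have hexp : (θ₂ - 1) * α' = (θ₁ - 1) * α := by
          rw [hα'def]; field_simp; ring
        calc (R'/r) ^ α = r ^ ((θ₁ - 1) * α) := by
              rw [hdivR', ← Real.rpow_mul hr.le]
          _ = (r ^ (θ₂ - 1)) ^ α' := by
              rw [← Real.rpow_mul hr.le, hexp]
          _ ≤ (R/r) ^ α' :=
              Real.rpow_le_rpow (Real.rpow_nonneg hr.le _) hbase hα'.le
    have hbdd : BddBelow (S θ₂) := ⟨0, fun β hβ => hβ.1.le⟩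
    have hinf := csInf_le hbdd hmem
    calc (1 - θ₂) / (1 - θ₁) * sInf (S θ₂)
        ≤ (1 - θ₂) / (1 - θ₁) * α' :=
          mul_le_mul_of_nonneg_left hinf (by positivity)
      _ = α := by rw [hα'def]; field_simp
end
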